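/- Let D be a digraph and let P and Q be two disjoint dipaths from {s1, s2} to {t1, t2}. Suppose there is a loose crossing with respect to P and Q, i.e., arcs uv and u'v' of D with u on P strictly before v' on P, u' on Q strictly before v on Q, and not both uv' ∈ A(P) and u'v ∈ A(Q). Then D contains an ({s1, s2}, {t1, t2})-shunt. -/

import Mathlib

open List

variable {V : Type*}

/-- The interior (internal vertices) of a path given as a list of vertices. -/
def interiorL (l : List V) : List V := l.tail.dropLast

/-- `l` is a directed path (dipath) in the digraph `D`. -/
def IsDipath (D : V → V → Prop) (l : List V) : Prop :=
  l ≠ [] ∧ l.Chain' D ∧ l.Nodup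

/-- `l` is a dipath from `x` to `y` in `D`. -/
def DipathFromTo (D : V → V → Prop) (l : List V) (x y : V) : Prop :=
  IsDipath D l ∧ l.head? = some x ∧ l.getLast? = some y

/-- `l` is a directed cycle in `D` (length at least 2, digraphs being strict). -/
def IsDicycle (D : V → V → Prop) (l : List V) : Prop :=
  2 ≤ l.length ∧ l.Nodup ∧ l.Chain' D ∧ ∃ a ∈ l.getLast?, ∃ b ∈ l.head?, D a b

/-- The restriction (induced subdigraph) of `D` to the vertex set `A`. -/
def restrict (D : V → V → Prop) (A : Set V) : V → V → Prop :=
  fun u v => D u v ∧ u ∈ A ∧ v ∈ A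

/-- Reachability by a dipath inside the vertex set `A`. -/
def ReachIn (D : V → V → Prop) (A : Set V) : V → V → Prop :=
  Relation.ReflTransGen (restrict D A)

/-- Reachability by a dipath. -/
def Reach (D : V → V → Prop) : V → V → Prop := Relation.ReflTransGen D

/-- `x` appears strictly before `y` along the list `l`. -/
def Before (l : List V) (x y : V) : Prop :=
  ∃ i j : ℕ, i < j ∧ l[i]? = some x ∧ l[j]? = some y

/-- `x` and `y` are consecutive (in this order) in `l`. -/
def ConsecIn (l : List V) (x y : V) : Prop :=
  ∃ i : ℕ, l[i]? = some x ∧ l[i + 1]? = some y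

/-- `D` contains a subdivision of `F`, realized by the branch-vertex map `branch` and,
for every arc `uv` of `F`, the dipath `P u v` from `branch u` to `branch v`;
the paths have length at least one and are internally disjoint from each other
and from the branch vertices. -/
def IsSubdivisionIn {W : Type*} (F : W → W → Prop) (D : V → V → Prop)
    (branch : W → V) (P : W → W → List V) : Prop :=
  Function.Injective branch ∧
  (∀ u v : W, F u v →
    DipathFromTo D (P u v) (branch u) (branch v) ∧ 2 ≤ (P u v).length) ∧
  (∀ u v : W, F u v → ∀ x ∈ interiorL (P u v), ∀ w : W, x ≠ branch w) ∧
  (∀ u v u' v' : W, F u v → F u' v' → (u, v) ≠ (u', v') →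
    ∀ x ∈ interiorL (P u v), x ∉ interiorL (P u' v'))

/-- `D` contains a subdivision of `F`. -/
def ContainsSubdivision {W : Type*} (F : W → W → Prop) (D : V → V → Prop) : Prop :=
  ∃ (branch : W → V) (P : W → W → List V), IsSubdivisionIn F D branch P

/-- An `({s1,s2},{t1,t2})`-shunt: dipaths `P`, `Q`, `R` with `R` of length at least 2,
`s(R)` on `P`, `t(R)` on `Q`, with `P`, `Q` and the interior of `R` pairwise disjoint,
`{s(P),s(Q)} = {s1,s2}` and `{t(P),t(Q)} = {t1,t2}`. -/
def IsShunt (D : V → V → Prop) (s1 s2 t1 t2 : V) : Prop :=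
  ∃ P Q R : List V,
    IsDipath D P ∧ IsDipath D Q ∧ IsDipath D R ∧ 3 ≤ R.length ∧
    (∀ z, z ∈ P → z ∉ Q) ∧
    (∀ a ∈ R.head?, a ∈ P) ∧ (∀ a ∈ R.getLast?, a ∈ Q) ∧
    (∀ z ∈ interiorL R, z ∉ P ∧ z ∉ Q) ∧
    ((P.head? = some s1 ∧ Q.head? = some s2) ∨
      (P.head? = some s2 ∧ Q.head? = some s1)) ∧
    ((P.getLast? = some t1 ∧ Q.getLast? = some t2) ∨
      (P.getLast? = some t2 ∧ Q.getLast? = some t1))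

/-! Write `P = A u M v' B` and `Q = A' u' M' v B'`. Looseness means that, after possibly
swapping `P` and `Q`, the segment `M` is nonempty. Rerouting along the two crossing arcs gives
the disjoint dipaths `A u v B'` and `A' u' v' B`, which keep the sources and swap the sinks, and
`u M v'` is a dipath of length at least 2 from the first to the second whose interior `M`
avoids both. -/

theorem Before.exists_eq_append {l : List V} {x y : V} (h : Before l x y) :
    ∃ A M B, l = A ++ x :: (M ++ y :: B) := by
  obtain ⟨i, j, hij, hi, hj⟩ := h
  obtain ⟨hil, rfl⟩ := List.getElem?_eq_some_iff.1 hi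
  have hy : y ∈ l.drop (i + 1) := mem_drop_iff_getElem.2 ⟨j - (i + 1), by grind, by grind⟩
  obtain ⟨M, B, hMB⟩ := append_of_mem hy
  exact ⟨l.take i, M, B, by rw [← hMB, ← drop_eq_getElem_cons hil, take_append_drop]⟩

theorem consecIn_append_cons_cons (A B : List V) (x y : V) : ConsecIn (A ++ x :: y :: B) x y :=
  ⟨A.length, by simp, by simp⟩

section
variable {D : V → V → Prop}

theorem IsDipath.of_infix {l l' : List V} (h : IsDipath D l') (hl : l <:+: l') (hne : l ≠ []) :
    IsDipath D l :=
  ⟨hne, IsChain.infix h.2.1 hl, h.2.2.sublist hl.sublist⟩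

theorem IsDipath.append {l₁ l₂ : List V} (h₁ : IsDipath D l₁) (h₂ : IsDipath D l₂)
    (hdisj : ∀ x ∈ l₁, x ∉ l₂) (harc : ∀ x ∈ l₁.getLast?, ∀ y ∈ l₂.head?, D x y) :
    IsDipath D (l₁ ++ l₂) :=
  ⟨by simp [h₁.1], h₁.2.1.append h₂.2.1 harc,
    nodup_append.2 ⟨h₁.2.2, h₂.2.2, fun x hx _ hy hxy => hdisj x hx (hxy ▸ hy)⟩⟩

theorem isShunt_of_reroute {P Q A M B A' M' B' : List V} {u v u' v' s1 s2 t1 t2 : V}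
    (hP : IsDipath D P) (hQ : IsDipath D Q) (hdisj : ∀ z ∈ P, z ∉ Q)
    (hs : (P.head? = some s1 ∧ Q.head? = some s2) ∨
      (P.head? = some s2 ∧ Q.head? = some s1))
    (ht : (P.getLast? = some t1 ∧ Q.getLast? = some t2) ∨
      (P.getLast? = some t2 ∧ Q.getLast? = some t1))
    (hPeq : P = A ++ u :: (M ++ v' :: B)) (hQeq : Q = A' ++ u' :: (M' ++ v :: B'))
    (hM : M ≠ []) (huv : D u v) (hu'v' : D u' v') :
    IsShunt D s1 s2 t1 t2 := by
  subst hPeq hQeq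
  have hPnodup := hP.2.2
  have hQnodup := hQ.2.2
  simp only [nodup_append, nodup_cons, mem_append, mem_cons] at hPnodup hQnodup
  simp only [mem_append, mem_cons] at hdisj
  have hP₁ : IsDipath D (A ++ [u]) := hP.of_infix ⟨[], M ++ v' :: B, by simp⟩ (by simp)
  have hP₂ : IsDipath D (v' :: B) := hP.of_infix ⟨A ++ u :: M, [], by simp⟩ (by simp)
  have hQ₁ : IsDipath D (A' ++ [u']) := hQ.of_infix ⟨[], M' ++ v :: B', by simp⟩ (by simp)
  have hQ₂ : IsDipath D (v :: B') := hQ.of_infix ⟨A' ++ u' :: M', [], by simp⟩ (by simp)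
  have hR : IsDipath D (u :: (M ++ [v'])) := hP.of_infix ⟨A, B, by simp⟩ (by simp)
  refine ⟨A ++ u :: v :: B', A' ++ u' :: v' :: B, u :: (M ++ [v']),
    ?_, ?_, hR, ?_, ?_, ?_, ?_, ?_, ?_, ?_⟩
  · simpa using hP₁.append hQ₂ (by grind) (by simpa using huv)
  · simpa using hQ₁.append hP₂ (by grind) (by simpa using hu'v')
  · simpa [Nat.one_le_iff_ne_zero] using hM
  · grind
  · simp
  · simp [getLast?_cons]
  · simp only [interiorL, tail_cons, dropLast_concat]
    grind
  · simpa using hs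
  · simpa [getLast?_cons] using ht.symm.imp And.symm And.symm

end

theorem shunt_of_loose_crossing (D : V → V → Prop) (s1 s2 t1 t2 : V)
    (P Q : List V) (hP : IsDipath D P) (hQ : IsDipath D Q)
    (hdisj : ∀ z, z ∈ P → z ∉ Q)
    (hs : (P.head? = some s1 ∧ Q.head? = some s2) ∨
      (P.head? = some s2 ∧ Q.head? = some s1))
    (ht : (P.getLast? = some t1 ∧ Q.getLast? = some t2) ∨
      (P.getLast? = some t2 ∧ Q.getLast? = some t1))
    (u v u' v' : V)
    (huv : D u v) (hu'v' : D u' v')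
    (hPbefore : Before P u v') (hQbefore : Before Q u' v)
    (hloose : ¬ (ConsecIn P u v' ∧ ConsecIn Q u' v)) :
    IsShunt D s1 s2 t1 t2 := by
  obtain ⟨A, M, B, hPeq⟩ := hPbefore.exists_eq_append
  obtain ⟨A', M', B', hQeq⟩ := hQbefore.exists_eq_append
  rcases eq_or_ne M [] with rfl | hM
  · rcases eq_or_ne M' [] with rfl | hM'
    · exact absurd ⟨hPeq ▸ consecIn_append_cons_cons A B u v',
        hQeq ▸ consecIn_append_cons_cons A' B' u' v⟩ hloose
    · exact isShunt_of_reroute hQ hP (fun z hzQ hzP => hdisj z hzP hzQ)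
        (hs.symm.imp And.symm And.symm) (ht.symm.imp And.symm And.symm) hQeq hPeq hM' hu'v' huv
  · exact isShunt_of_reroute hP hQ hdisj hs ht hPeq hQeq hM huv hu'v'
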